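/- (Positivity of the nonlinearity near q₃ = 0; claim (signf).) Let A < 0, B > 0, C > 0 and define f(q₁, q₃) := 6q₃(A − Bq₃ + 6Cq₃²) + 2(B + 6Cq₃)q₁². Then there exists δ ∈ (0, s₊/6), depending only on A, B, C, such that f(q₁, q₃) > 0 for every q₁ ∈ ℝ and every q₃ ∈ [−δ, 0). -/

import Mathlib

/-!
Where `q₃ < 0`, `f` is positive as soon as the factor `A − Bq₃ + 6Cq₃²` is negative and the
coefficient `B + 6Cq₃` of `q₁²` is nonnegative. At `q₃ = 0` these expressions are `A < 0` and
`B > 0`, so by continuity both conditions hold on a left neighbourhood of `0`, which can be taken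
inside `(−s₊/6, 0]`.
-/

open Set

noncomputable section

/-- `s₊ = (B + √(B² + 24|A|C))/(4C)`. -/
def splus (A B C : ℝ) : ℝ := (B + Real.sqrt (B ^ 2 + 24 * |A| * C)) / (4 * C)

/-- The nonlinearity `f(q₁, q₃) = 6q₃(A − Bq₃ + 6Cq₃²) + 2(B + 6Cq₃)q₁²`. -/
def fnl (A B C q1 q3 : ℝ) : ℝ :=
  6 * q3 * (A - B * q3 + 6 * C * q3 ^ 2) + 2 * (B + 6 * C * q3) * q1 ^ 2

theorem splus_pos (A : ℝ) {B C : ℝ} (hB : 0 < B) (hC : 0 < C) : 0 < splus A B C := by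
  unfold splus
  positivity

theorem fnl_pos_of_neg {A B C q3 : ℝ} (q1 : ℝ) (hq3 : q3 < 0)
    (hquad : A - B * q3 + 6 * C * q3 ^ 2 < 0) (hlin : 0 ≤ B + 6 * C * q3) :
    0 < fnl A B C q1 q3 := by
  have hcubic : 0 < 6 * q3 * (A - B * q3 + 6 * C * q3 ^ 2) :=
    mul_pos_of_neg_of_neg (by linarith) hquad
  unfold fnl
  positivity

theorem eventually_nhds_zero_quad_neg_and_lin_pos {A B : ℝ} (C : ℝ) (hA : A < 0) (hB : 0 < B) :
    ∀ᶠ q3 in nhds (0 : ℝ), A - B * q3 + 6 * C * q3 ^ 2 < 0 ∧ 0 < B + 6 * C * q3 := by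
  have hquad : ∀ᶠ q3 in nhds (0 : ℝ), A - B * q3 + 6 * C * q3 ^ 2 < 0 :=
    ContinuousAt.eventually_lt (by fun_prop) continuousAt_const (by simpa using hA)
  have hlin : ∀ᶠ q3 in nhds (0 : ℝ), 0 < B + 6 * C * q3 :=
    ContinuousAt.eventually_lt continuousAt_const (by fun_prop) (by simpa using hB)
  exact hquad.and hlin

/-- claim (signf): there exists `δ ∈ (0, s₊/6)`, depending only on
`A, B, C`, such that `f(q₁, q₃) > 0` for every `q₁ ∈ ℝ` and every `q₃ ∈ [−δ, 0)`. -/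
theorem statement_12 (A B C : ℝ) (hA : A < 0) (hB : 0 < B) (hC : 0 < C) :
    ∃ δ ∈ Ioo (0 : ℝ) (splus A B C / 6),
      ∀ q1 : ℝ, ∀ q3 ∈ Ico (-δ) (0 : ℝ), 0 < fnl A B C q1 q3 := by
  have hs := splus_pos A hB hC
  obtain ⟨l, ⟨hl_ge, hl_neg⟩, hsub⟩ := exists_Ioc_subset_of_mem_nhds'
    (eventually_nhds_zero_quad_neg_and_lin_pos C hA hB) (by linarith : -(splus A B C / 6) < 0)
  -- halving `l` puts the closed endpoint `-δ` inside `Ioc l 0` and keeps `δ < s₊/6` strict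
  refine ⟨-l / 2, ⟨by linarith, by linarith⟩, fun q1 q3 ⟨hq3_ge, hq3_neg⟩ => ?_⟩
  obtain ⟨hquad, hlin⟩ := hsub ⟨by linarith, hq3_neg.le⟩
  exact fnl_pos_of_neg q1 hq3_neg hquad hlin.le
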